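/- Let (m,n) be a coprime pair of positive integers and let R ≠ R_0 = {0,1,…,m+n−1} be the rank set of an (m,n)-Dyck path. Then both ℒ(R) = ((R∖{0}) ∪ {m+n}) − min(R∖{0}) and ℛ(R) = (R∖{max R}) ∪ {max R − m − n} are rank sets of (m,n)-Dyck paths. -/

import Mathlib

/-- The list of ranks of the lattice points visited by a path (excluding the final
point), starting from rank `r`.  A `true` entry is a north (`u`) step, which adds `m`
to the rank; a `false` entry is an east (`d`) step, which subtracts `n`. -/
def rankWalk (m n : ℤ) : List Bool → ℤ → List ℤ
  | [], _ => []
  | b :: bs, r => r :: rankWalk m n bs (r + if b then m else -n)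

/-- An `(m,n)`-path: a word of `n` north steps (`true`) and `m` east steps (`false`). -/
def IsPathWord (m n : ℕ) (P : List Bool) : Prop :=
  P.length = m + n ∧ P.count true = n

/-- An `(m,n)`-Dyck path: an `(m,n)`-path all of whose ranks are nonnegative. -/
def IsDyckWord (m n : ℕ) (P : List Bool) : Prop :=
  IsPathWord m n P ∧ ∀ r ∈ rankWalk (m : ℤ) (n : ℤ) P 0, 0 ≤ r

/-- The rank set of a path: the ranks of its `m+n` lattice points other than the endpoint. -/
def rankSet (m n : ℕ) (P : List Bool) : Finset ℤ :=
  (rankWalk (m : ℤ) (n : ℤ) P 0).toFinset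

/-- `R` is the rank set of some `(m,n)`-path. -/
def IsRankSet (m n : ℕ) (R : Finset ℤ) : Prop :=
  ∃ P : List Bool, IsPathWord m n P ∧ rankSet m n P = R

/-- `R` is the rank set of some `(m,n)`-Dyck path. -/
def IsDyckRankSet (m n : ℕ) (R : Finset ℤ) : Prop :=
  ∃ P : List Bool, IsDyckWord m n P ∧ rankSet m n P = R

/-- The rank set `R₀ = {0, 1, …, m+n-1}` of the unique Dyck path of area `0`. -/
def baseRankSet (m n : ℕ) : Finset ℤ :=
  (Finset.range (m + n)).image (fun i : ℕ => (i : ℤ))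

/-- The left operation `ℒ(R) = ((R \ {0}) ∪ {m+n}) - min (R \ {0})`. -/
def leftOp (m n : ℕ) (R : Finset ℤ) : Finset ℤ :=
  ((R.erase 0) ∪ {((m : ℤ) + n)}).image
    (fun r => r - WithTop.untopD 0 (R.erase 0).min)

/-- The right operation `ℛ(R) = (R \ {max R}) ∪ {max R - m - n}`. -/
def rightOp (m n : ℕ) (R : Finset ℤ) : Finset ℤ :=
  (R.erase (WithBot.unbotD 0 R.max)) ∪ {WithBot.unbotD 0 R.max - m - n}

/-!
Encode a path as a word in `true` (north step, rank `+m`) and `false` (east step, rank `-n`).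
A Dyck path starts with a north and ends with an east step, `P = u W d`. Read from rank `m`, the
word `W u d` visits exactly the ranks `(R \ {0}) ∪ {m + n}`; its cyclic rotation starting at the
lowest of them, `c`, is a Dyck path whose ranks are those ranks shifted by `-c`, i.e. `ℒ(R)`.
For `ℛ(R)`: the maximal rank `M` is entered by a north and left by an east step, and swapping
these two steps replaces `M` by `M - m - n`, which is nonnegative because `R ≠ R₀` forces
`M ≥ m + n`. Coprimality makes the `m + n` ranks of a path distinct, which is what turns these
computations on lists of ranks into statements about rank sets.
-/

attribute [simp] rankWalk

def rankChange (m n : ℤ) (P : List Bool) : ℤ := (P.map fun b => if b then m else -n).sum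

section

variable {m n : ℤ}

@[simp] lemma rankChange_nil : rankChange m n [] = 0 := rfl

@[simp] lemma rankChange_cons (b : Bool) (P : List Bool) :
    rankChange m n (b :: P) = (if b then m else -n) + rankChange m n P := List.sum_cons

@[simp] lemma rankChange_append (A B : List Bool) :
    rankChange m n (A ++ B) = rankChange m n A + rankChange m n B := by
  simp [rankChange]

lemma rankChange_eq_count (P : List Bool) :
    rankChange m n P = P.count true * m - P.count false * n := by
  induction P with
  | nil => simp
  | cons b P ih => cases b <;> simp [ih] <;> ring

lemma rankWalk_append (A B : List Bool) (r : ℤ) :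
    rankWalk m n (A ++ B) r = rankWalk m n A r ++ rankWalk m n B (r + rankChange m n A) := by
  induction A generalizing r with
  | nil => simp
  | cons a A ih => simp [ih, add_assoc]

@[simp] lemma rankWalk_length (P : List Bool) (r : ℤ) : (rankWalk m n P r).length = P.length := by
  induction P generalizing r with
  | nil => rfl
  | cons b P ih => simp [ih]

lemma rankWalk_add (P : List Bool) (r t : ℤ) :
    rankWalk m n P (r + t) = (rankWalk m n P r).map (· + t) := by
  induction P generalizing r with
  | nil => rfl
  | cons b P ih => simp [← ih, add_right_comm]

lemma exists_append_of_mem_rankWalk {P : List Bool} {r x : ℤ} (h : x ∈ rankWalk m n P r) :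
    ∃ A b B, P = A ++ b :: B ∧ x = r + rankChange m n A := by
  induction P generalizing r with
  | nil => simp at h
  | cons b P ih =>
    rcases List.mem_cons.1 h with rfl | h
    · exact ⟨[], b, P, rfl, by simp⟩
    · obtain ⟨A, c, B, rfl, rfl⟩ := ih h
      exact ⟨b :: A, c, B, rfl, by simp [add_assoc]⟩

lemma add_rankChange_mem_rankWalk (A B : List Bool) (b : Bool) (r : ℤ) :
    r + rankChange m n A ∈ rankWalk m n (A ++ b :: B) r := by
  simp [rankWalk_append]

lemma add_rankChange_concat_mem_rankWalk {A B : List Bool} {b : Bool}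
    (h : rankChange m n (A ++ b :: B) = 0) (r : ℤ) :
    r + rankChange m n (A ++ [b]) ∈ rankWalk m n (A ++ b :: B) r := by
  cases B with
  | nil => cases A <;> simp_all
  | cons c B =>
    simpa using add_rankChange_mem_rankWalk (m := m) (n := n) (A ++ [b]) B c r

lemma rankWalk_append_comm_perm {A B : List Bool} (h : rankChange m n (A ++ B) = 0) (r : ℤ) :
    (rankWalk m n (B ++ A) 0).Perm
      ((rankWalk m n (A ++ B) r).map (· - (r + rankChange m n A))) := by
  rw [rankChange_append] at h
  simp only [sub_eq_add_neg]
  rw [← rankWalk_add, rankWalk_append, rankWalk_append, zero_add,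
    show r + -(r + rankChange m n A) + rankChange m n A = 0 by ring,
    show rankChange m n B = r + -(r + rankChange m n A) by linarith]
  exact List.perm_append_comm

/-- The cycle lemma. -/
lemma exists_perm_rankWalk_nonneg {P : List Bool} {r c : ℤ} (hP : rankChange m n P = 0)
    (hc : c ∈ rankWalk m n P r) (hmin : ∀ y ∈ rankWalk m n P r, c ≤ y) :
    ∃ Q : List Bool, Q.Perm P ∧ (∀ x ∈ rankWalk m n Q 0, 0 ≤ x) ∧
      (rankWalk m n Q 0).toFinset = (rankWalk m n P r).toFinset.image (· - c) := by
  obtain ⟨A, b, B, rfl, rfl⟩ := exists_append_of_mem_rankWalk hc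
  have hperm := rankWalk_append_comm_perm hP r
  refine ⟨(b :: B) ++ A, List.perm_append_comm, fun x hx => ?_, ?_⟩
  · obtain ⟨y, hy, rfl⟩ := List.mem_map.1 (hperm.subset hx)
    linarith [hmin y hy]
  · rw [List.toFinset_eq_of_perm _ _ hperm]
    ext x
    simp only [List.mem_toFinset, List.mem_map, Finset.mem_image]

lemma exists_eq_append_true_false_of_forall_le (hm : 0 < m) (hn : 0 < n) {P : List Bool}
    {M : ℤ} (hP : rankChange m n P = 0) (hM : M ∈ rankWalk m n P 0) (hM0 : 0 < M)
    (hle : ∀ x ∈ rankWalk m n P 0, x ≤ M) :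
    ∃ A B, P = A ++ true :: false :: B ∧ rankChange m n A = M - m := by
  obtain ⟨A, b, B, rfl, hMA⟩ := exists_append_of_mem_rankWalk hM
  obtain rfl : b = false := by
    have := hle _ (add_rankChange_concat_mem_rankWalk hP 0)
    cases b
    · rfl
    · simp at this; omega
  rcases A.eq_nil_or_concat' with rfl | ⟨A, a, rfl⟩
  · simp at hMA; omega
  cases a
  · have := hle _ (by simpa using add_rankChange_mem_rankWalk A (false :: B) false 0)
    simp at hMA this; omega
  · exact ⟨A, B, by simp, by simp at hMA; linarith⟩

end

lemma List.toFinset_erase_of_nodup_cons {α : Type*} [DecidableEq α] {a : α} {l : List α}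
    (h : (a :: l).Nodup) : (a :: l).toFinset.erase a = l.toFinset := by
  rw [List.toFinset_cons, Finset.erase_insert (by simpa using (List.nodup_cons.1 h).1)]

section

variable {m n : ℕ}

lemma dvd_length_of_rankChange_eq_zero (hcop : m.Coprime n) {W : List Bool}
    (h : rankChange m n W = 0) : m + n ∣ W.length := by
  rw [rankChange_eq_count, sub_eq_zero] at h
  have h' : W.count true * m = W.count false * n := by exact_mod_cast h
  rw [← W.count_true_add_count_false]
  refine (Nat.coprime_self_add_left.2 hcop.symm).dvd_of_dvd_mul_right ⟨W.count false, ?_⟩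
  linarith

lemma rankWalk_nodup (hcop : m.Coprime n) {P : List Bool} (hP : P.length ≤ m + n) (r : ℤ) :
    (rankWalk m n P r).Nodup := by
  induction P generalizing r with
  | nil => simp
  | cons b P ih =>
    rw [List.length_cons] at hP
    refine List.nodup_cons.2 ⟨fun hr => ?_, ih (by omega) _⟩
    obtain ⟨A, c, B, rfl, hA⟩ := exists_append_of_mem_rankWalk hr
    have hdvd := dvd_length_of_rankChange_eq_zero hcop (W := b :: A) (by simp; linarith)
    have := Nat.le_of_dvd (by simp) hdvd
    simp at hP this
    omega

lemma IsPathWord.rankChange_eq_zero {P : List Bool} (hP : IsPathWord m n P) :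
    rankChange m n P = 0 := by
  have hfalse : P.count false = m := by
    have := P.count_true_add_count_false
    have := hP.1
    have := hP.2
    omega
  rw [rankChange_eq_count, hP.2, hfalse]
  ring

lemma IsPathWord.of_perm {P Q : List Bool} (hP : IsPathWord m n P) (hQP : Q.Perm P) :
    IsPathWord m n Q :=
  ⟨hQP.length_eq.trans hP.1, (hQP.count_eq true).trans hP.2⟩

lemma IsPathWord.card_rankSet (hcop : m.Coprime n) {P : List Bool} (hP : IsPathWord m n P) :
    (rankSet m n P).card = m + n := by
  rw [rankSet, List.toFinset_card_of_nodup (rankWalk_nodup hcop hP.1.le 0), rankWalk_length, hP.1]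

lemma IsDyckWord.exists_eq_true_cons_append_false (hm : 0 < m) (hn : 0 < n) {P : List Bool}
    (hP : IsDyckWord m n P) : ∃ W, P = true :: (W ++ [false]) := by
  have hclosed := hP.1.rankChange_eq_zero
  obtain ⟨b, P', rfl⟩ : ∃ b P', P = b :: P' :=
    List.exists_cons_of_length_pos (by rw [hP.1.1]; omega)
  have hb : b = true := by
    have := hP.2 _ (add_rankChange_concat_mem_rankWalk (A := []) hclosed 0)
    cases b <;> simp_all
  subst hb
  obtain ⟨W, c, rfl⟩ : ∃ W c, P' = W ++ [c] := by
    rcases P'.eq_nil_or_concat' with rfl | h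
    · simp at hclosed; omega
    · exact h
  cases c
  · exact ⟨W, rfl⟩
  · have := hP.2 _ (add_rankChange_mem_rankWalk (true :: W) [] true 0)
    simp at hclosed this
    omega

theorem IsDyckRankSet.leftOp (hm : 0 < m) (hn : 0 < n) (hcop : m.Coprime n) {R : Finset ℤ}
    (hR : IsDyckRankSet m n R) : IsDyckRankSet m n (leftOp m n R) := by
  obtain ⟨P, hP, rfl⟩ := hR
  have hclosed := hP.1.rankChange_eq_zero
  obtain ⟨W, rfl⟩ := hP.exists_eq_true_cons_append_false hm hn
  have hW : rankChange m n W = n - m := by simp at hclosed; linarith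
  set L := rankWalk m n W m
  have hwalkP : rankWalk m n (true :: (W ++ [false])) 0 = 0 :: (L ++ [(n : ℤ)]) := by
    simp [rankWalk_append, hW, L]
  have hwalkQ₀ :
      ∀ y, y ∈ rankWalk m n (W ++ [true, false]) m ↔ y ∈ L ++ [(n : ℤ)] ∨ y = m + n := by
    intro y
    simp [rankWalk_append, hW, L, or_assoc, add_comm (n : ℤ)]
  have herase : (rankSet m n (true :: (W ++ [false]))).erase 0 = (L ++ [(n : ℤ)]).toFinset := by
    rw [rankSet, hwalkP, List.toFinset_erase_of_nodup_cons]
    rw [← hwalkP]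
    exact rankWalk_nodup hcop hP.1.1.le 0
  rw [_root_.leftOp, herase]
  obtain ⟨c, hcmin⟩ := Finset.min_of_nonempty (s := (L ++ [(n : ℤ)]).toFinset) (by simp)
  have hc_le : ∀ y ∈ L ++ [(n : ℤ)], c ≤ y := fun y hy =>
    Finset.min_le_of_eq (List.mem_toFinset.2 hy) hcmin
  obtain ⟨Q, hQP, hQ_nonneg, hQ_ranks⟩ := exists_perm_rankWalk_nonneg (P := W ++ [true, false])
    (by simp [hW]; ring) ((hwalkQ₀ c).2 (.inl (List.mem_toFinset.1 (Finset.mem_of_min hcmin))))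
    (fun y hy => by
      rcases (hwalkQ₀ y).1 hy with hy | rfl
      · exact hc_le y hy
      · linarith [hc_le n (by simp)])
  refine ⟨Q, ⟨hP.1.of_perm (hQP.trans (by simp [List.perm_middle])), hQ_nonneg⟩, ?_⟩
  rw [rankSet, hQ_ranks, hcmin, WithTop.untopD_coe]
  congr 1
  ext y
  simp only [List.mem_toFinset, hwalkQ₀, Finset.mem_union, Finset.mem_singleton]

lemma IsDyckWord.exists_mem_rankSet_add_le (hcop : m.Coprime n) {P : List Bool}
    (hP : IsDyckWord m n P) (hne : rankSet m n P ≠ baseRankSet m n) :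
    ∃ y ∈ rankSet m n P, (m + n : ℤ) ≤ y := by
  by_contra! hlt
  refine hne (Finset.eq_of_subset_of_card_le (fun y hy => ?_) ?_)
  · have := hP.2 y (List.mem_toFinset.1 hy)
    have := hlt y hy
    exact Finset.mem_image.2 ⟨y.toNat, by simp; omega, by omega⟩
  · rw [hP.1.card_rankSet hcop]
    exact Finset.card_image_le.trans (by simp)

theorem IsDyckRankSet.rightOp (hm : 0 < m) (hn : 0 < n) (hcop : m.Coprime n) {R : Finset ℤ}
    (hR : IsDyckRankSet m n R) (hne : R ≠ baseRankSet m n) :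
    IsDyckRankSet m n (rightOp m n R) := by
  obtain ⟨P, hP, rfl⟩ := hR
  obtain ⟨y, hy, hy_ge⟩ := hP.exists_mem_rankSet_add_le hcop hne
  obtain ⟨M, hMmax⟩ := Finset.max_of_nonempty ⟨y, hy⟩
  rw [_root_.rightOp, hMmax, WithBot.unbotD_coe]
  have hM_ge : (m + n : ℤ) ≤ M := hy_ge.trans (Finset.le_max_of_eq hy hMmax)
  have hnodup := rankWalk_nodup hcop hP.1.1.le 0
  obtain ⟨A, B, rfl, hA⟩ := exists_eq_append_true_false_of_forall_le (by omega) (by omega)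
    hP.1.rankChange_eq_zero (List.mem_toFinset.1 (Finset.mem_of_max hMmax)) (by omega)
    (fun x hx => Finset.le_max_of_eq (List.mem_toFinset.2 hx) hMmax)
  set Lpre := rankWalk m n A 0
  set Lpost := rankWalk m n B (M - n)
  have hwalkP : rankWalk m n (A ++ true :: false :: B) 0 = Lpre ++ (M - m) :: M :: Lpost := by
    simp [rankWalk_append, hA, Lpre, Lpost, sub_eq_add_neg]
  have hwalkQ : rankWalk m n (A ++ false :: true :: B) 0 =
      Lpre ++ (M - m) :: (M - m - n) :: Lpost := by
    simp [rankWalk_append, hA, Lpre, Lpost]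
    exact ⟨by ring, by congr 1; ring⟩
  refine ⟨A ++ false :: true :: B, ⟨hP.1.of_perm ((List.Perm.swap true false B).append_left A),
    fun x hx => ?_⟩, ?_⟩
  · have hP₀ : ∀ x ∈ Lpre ++ (M - m) :: M :: Lpost, 0 ≤ x := hwalkP ▸ hP.2
    rw [hwalkQ] at hx
    simp only [List.mem_append, List.mem_cons] at hx hP₀
    rcases hx with hx | rfl | rfl | hx
    · exact hP₀ x (.inl hx)
    · exact hP₀ _ (.inr (.inl rfl))
    · omega
    · exact hP₀ x (.inr (.inr (.inr hx)))
  · have hperm : (Lpre ++ (M - m) :: M :: Lpost).Perm (M :: (Lpre ++ (M - m) :: Lpost)) := by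
      simpa using List.perm_middle (a := M) (l₁ := Lpre ++ [M - m]) (l₂ := Lpost)
    rw [rankSet, rankSet, hwalkP, hwalkQ, List.toFinset_eq_of_perm _ _ hperm,
      List.toFinset_erase_of_nodup_cons (hperm.nodup_iff.1 (hwalkP ▸ hnodup))]
    ext x
    simp

end

/-- For the rank set `R ≠ R₀ = {0, 1, …, m+n-1}` of an `(m,n)`-Dyck
path, both `ℒ(R)` and `ℛ(R)` are rank sets of `(m,n)`-Dyck paths. -/
theorem leftOp_rightOp_dyck (m n : ℕ) (hm : 0 < m) (hn : 0 < n)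
    (hcop : Nat.Coprime m n) (R : Finset ℤ) (hR : IsDyckRankSet m n R)
    (hne : R ≠ baseRankSet m n) :
    IsDyckRankSet m n (leftOp m n R) ∧ IsDyckRankSet m n (rightOp m n R) :=
  ⟨hR.leftOp hm hn hcop, hR.rightOp hm hn hcop hne⟩
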